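/- arXiv:1803.04344 — 7 statements merged into one kernel-verified Lean document; each statement's English description precedes it below -/
import Mathlib

section
/- Let M : ℝ → ℝ be positive and continuous, and let γ : [0,τ] → ℝ be any C¹, strictly monotonically decreasing curve with γ(0) = γ_i and γ(τ) = γ_f (γ_f < γ_i). Then max_{t ∈ [0,τ]} √(L(γ(t), γ̇(t))) ≥ (1/τ) ∫_{γ_f}^{γ_i} √(M(s)/2) ds, and equality holds if the function t ↦ L(γ(t), γ̇(t)) is constant on [0,τ]. -/
/-!
Since `√(½ M(γ) γ̇²) = √(M(γ)/2) |γ̇|` and `γ̇ ≤ 0`, substituting `s = γ(t)` shows that the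
integral of `√L` over `[0, τ]` is `∫_{γf}^{γi} √(M/2)`: the right-hand side is the mean of
`√L` over `[0, τ]`, which is at most its maximum, with equality when `√L` is constant.
-/

open Set intervalIntegral

lemma Real.sqrt_half_mul_mul_sq (m v : ℝ) : √(1 / 2 * m * v ^ 2) = √(m / 2) * |v| := by
  rw [← Real.sqrt_sq_eq_abs, ← Real.sqrt_mul' _ (sq_nonneg v)]
  ring_nf

lemma AntitoneOn.deriv_nonpos_of_mem_Icc {γ : ℝ → ℝ} {a b t : ℝ} (hab : a < b)
    (hγ : AntitoneOn γ (Icc a b)) (hd : DifferentiableAt ℝ γ t) (ht : t ∈ Icc a b) :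
    deriv γ t ≤ 0 := by
  rw [← hd.derivWithin (uniqueDiffOn_Icc hab t ht)]
  exact hγ.derivWithin_nonpos

lemma integral_comp_mul_abs_deriv_of_antitoneOn {g γ : ℝ → ℝ} {a b : ℝ} (hab : a < b)
    (hg : Continuous g) (hγ : ContDiff ℝ 1 γ) (hmono : AntitoneOn γ (Icc a b)) :
    ∫ t in a..b, g (γ t) * |deriv γ t| = ∫ s in γ b..γ a, g s := by
  have hdiff : Differentiable ℝ γ := hγ.differentiable one_ne_zero
  have habs : EqOn (fun t => g (γ t) * |deriv γ t|) (fun t => -((g ∘ γ) t * deriv γ t))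
      (uIcc a b) := by
    intro t ht
    rw [uIcc_of_le hab.le] at ht
    simp [abs_of_nonpos (hmono.deriv_nonpos_of_mem_Icc hab (hdiff t) ht)]
  rw [integral_congr habs, integral_neg, integral_symm,
    integral_comp_mul_deriv (fun t _ => (hdiff t).hasDerivAt)
      (hγ.continuous_deriv le_rfl).continuousOn hg, neg_neg]

lemma integral_le_mul_sSup_image {f : ℝ → ℝ} {a b : ℝ} (hab : a ≤ b)
    (hf : ContinuousOn f (Icc a b)) :
    ∫ x in a..b, f x ≤ (b - a) * sSup (f '' Icc a b) := by
  have hbdd : BddAbove (f '' Icc a b) := (isCompact_Icc.image_of_continuousOn hf).bddAbove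
  calc ∫ x in a..b, f x ≤ ∫ _ in a..b, sSup (f '' Icc a b) :=
        integral_mono_on hab (hf.intervalIntegrable_of_Icc hab) intervalIntegrable_const
          fun x hx => le_csSup hbdd (mem_image_of_mem f hx)
    _ = (b - a) * sSup (f '' Icc a b) := by simp

lemma mean_le_sSup_image {f : ℝ → ℝ} {a b : ℝ} (hab : a < b) (hf : ContinuousOn f (Icc a b)) :
    1 / (b - a) * ∫ x in a..b, f x ≤ sSup (f '' Icc a b) := by
  rw [one_div_mul_eq_div, div_le_iff₀' (sub_pos.mpr hab)]
  exact integral_le_mul_sSup_image hab.le hf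

lemma sSup_image_eq_mean_of_eqOn_const {f : ℝ → ℝ} {a b c : ℝ} (hab : a < b)
    (hf : EqOn f (fun _ => c) (Icc a b)) :
    sSup (f '' Icc a b) = 1 / (b - a) * ∫ x in a..b, f x := by
  rw [hf.image_eq.trans ((nonempty_Icc.mpr hab.le).image_const c), csSup_singleton,
    integral_congr (uIcc_of_le hab.le ▸ hf), integral_const, smul_eq_mul,
    ← mul_assoc, one_div_mul_cancel (sub_pos.mpr hab).ne', one_mul]

theorem max_sqrt_lagrangian_ge_mean_general
    (τ γi γf : ℝ) (hτ : 0 < τ)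
    (M γ : ℝ → ℝ) (hMcont : Continuous M)
    (hγ : ContDiff ℝ 1 γ)
    (hmono : StrictAntiOn γ (Set.Icc (0 : ℝ) τ))
    (h0 : γ 0 = γi) (hτf : γ τ = γf) :
    (1 / τ) * ∫ s in γf..γi, Real.sqrt (M s / 2)
      ≤ sSup ((fun t => Real.sqrt ((1 / 2) * M (γ t) * (deriv γ t) ^ 2)) ''
          Set.Icc (0 : ℝ) τ)
    ∧ ((∃ c : ℝ, ∀ t ∈ Set.Icc (0 : ℝ) τ,
          (1 / 2) * M (γ t) * (deriv γ t) ^ 2 = c) →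
        sSup ((fun t => Real.sqrt ((1 / 2) * M (γ t) * (deriv γ t) ^ 2)) ''
            Set.Icc (0 : ℝ) τ)
          = (1 / τ) * ∫ s in γf..γi, Real.sqrt (M s / 2)) := by
  have hsqrtM : Continuous fun s => √(M s / 2) := by fun_prop
  have hint : ∫ t in (0 : ℝ)..τ, √(1 / 2 * M (γ t) * deriv γ t ^ 2)
      = ∫ s in γf..γi, √(M s / 2) := by
    simp only [Real.sqrt_half_mul_mul_sq]
    rw [← h0, ← hτf]
    exact integral_comp_mul_abs_deriv_of_antitoneOn hτ hsqrtM hγ hmono.antitoneOn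
  have hcont : ContinuousOn (fun t => √(1 / 2 * M (γ t) * deriv γ t ^ 2)) (Icc 0 τ) := by
    have hγ' := hγ.continuous_deriv le_rfl
    have hγc := hγ.continuous
    fun_prop
  rw [← hint]
  refine ⟨by simpa using mean_le_sSup_image hτ hcont, ?_⟩
  rintro ⟨c, hc⟩
  simpa using sSup_image_eq_mean_of_eqOn_const (c := √c) hτ fun t ht => congrArg _ (hc t ht)

/-- For a positive continuous mass function `M` and any C¹, strictly
monotonically decreasing curve `γ : [0, τ] → ℝ` with `γ 0 = γi`, `γ τ = γf < γi`, the
maximum of `√(L(γ(t), γ̇(t)))` (with `L(γ, v) = (1/2) M(γ) v²`) over `[0, τ]` is at least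
`(1/τ) ∫_{γf}^{γi} √(M(s)/2) ds`, with equality if `t ↦ L(γ(t), γ̇(t))` is constant. -/
theorem max_sqrt_lagrangian_ge_mean
    (τ γi γf : ℝ) (hτ : 0 < τ) (hfi : γf < γi)
    (M γ : ℝ → ℝ) (hMcont : Continuous M) (hMpos : ∀ x, 0 < M x)
    (hγ : ContDiff ℝ 1 γ)
    (hmono : StrictAntiOn γ (Set.Icc (0 : ℝ) τ))
    (h0 : γ 0 = γi) (hτf : γ τ = γf) :
    (1 / τ) * ∫ s in γf..γi, Real.sqrt (M s / 2)
      ≤ sSup ((fun t => Real.sqrt ((1 / 2) * M (γ t) * (deriv γ t) ^ 2)) ''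
          Set.Icc (0 : ℝ) τ)
    ∧ ((∃ c : ℝ, ∀ t ∈ Set.Icc (0 : ℝ) τ,
          (1 / 2) * M (γ t) * (deriv γ t) ^ 2 = c) →
        sSup ((fun t => Real.sqrt ((1 / 2) * M (γ t) * (deriv γ t) ^ 2)) ''
            Set.Icc (0 : ℝ) τ)
          = (1 / τ) * ∫ s in γf..γi, Real.sqrt (M s / 2)) :=
  max_sqrt_lagrangian_ge_mean_general τ γi γf hτ M γ hMcont hγ hmono h0 hτf
end

section
/- Let M : ℝ → ℝ be positive and continuously differentiable, and let γ₀ : [0,τ] → ℝ be a C², strictly monotonically decreasing solution of the Euler–Lagrange equation M(γ₀) γ̈₀ + (1/2) M'(γ₀) γ̇₀² = 0 with γ₀(0) = γ_i and γ₀(τ) = γ_f. Then γ₀ minimizes the error measure E_∞[γ] = max_{t ∈ [0,τ]} L(γ(t), γ̇(t)) among all C¹, strictly monotonically decreasing curves γ : [0,τ] → ℝ with γ(0) = γ_i and γ(τ) = γ_f; that is, max_t L(γ₀(t), γ̇₀(t)) ≤ max_t L(γ(t), γ̇(t)) for every such curve γ. -/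
/-!
The Lagrangian is conserved along a solution of the Euler–Lagrange equation, since its time
derivative is `γ̇` times the Euler–Lagrange expression. For every curve
`-γ̇ √(M γ) ≤ |γ̇| √(M γ) = √(2 L(γ, γ̇))`, with equality where `γ̇ ≤ 0`, and by the change of
variables `u = γ t` the integral of `-γ̇ √(M γ)` over `[0, τ]` is `∫_{γf}^{γi} √M` for every curve
with the given endpoints. Hence `τ √(2 E∞[γ₀]) = ∫_{γf}^{γi} √M ≤ τ √(2 E∞[γ])`.
-/

open Set intervalIntegral

noncomputable def lagrangian (M : ℝ → ℝ) (x v : ℝ) : ℝ := 1 / 2 * M x * v ^ 2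

section

variable {M γ : ℝ → ℝ} {a b : ℝ}

lemma lagrangian_nonneg {x : ℝ} (hx : 0 ≤ M x) (v : ℝ) : 0 ≤ lagrangian M x v := by
  unfold lagrangian; positivity

lemma sqrt_two_mul_lagrangian (x v : ℝ) : √(2 * lagrangian M x v) = |v| * √(M x) := by
  rw [lagrangian, show 2 * (1 / 2 * M x * v ^ 2) = v ^ 2 * M x by ring,
    Real.sqrt_mul (sq_nonneg v), Real.sqrt_sq_eq_abs]

lemma continuous_lagrangian_comp (hM : Continuous M) (hγ : ContDiff ℝ 1 γ) :
    Continuous fun t => lagrangian M (γ t) (deriv γ t) :=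
  (continuous_const.mul (hM.comp hγ.continuous)).mul ((hγ.continuous_deriv le_rfl).pow 2)

lemma lagrangian_comp_le_sSup (hM : Continuous M) (hγ : ContDiff ℝ 1 γ) {t : ℝ}
    (ht : t ∈ Icc a b) :
    lagrangian M (γ t) (deriv γ t)
      ≤ sSup ((fun s => lagrangian M (γ s) (deriv γ s)) '' Icc a b) :=
  le_csSup (isCompact_Icc.image (continuous_lagrangian_comp hM hγ)).bddAbove
    (mem_image_of_mem _ ht)

lemma hasDerivAt_lagrangian_comp {t : ℝ} (hM : DifferentiableAt ℝ M (γ t))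
    (hγ : DifferentiableAt ℝ γ t) (hγ' : DifferentiableAt ℝ (deriv γ) t) :
    HasDerivAt (fun s => lagrangian M (γ s) (deriv γ s))
      (deriv γ t * (M (γ t) * deriv (deriv γ) t
        + 1 / 2 * deriv M (γ t) * deriv γ t ^ 2)) t := by
  have hMγ := hM.hasDerivAt.comp t hγ.hasDerivAt
  refine ((hMγ.const_mul (1 / 2)).mul (hγ'.hasDerivAt.pow 2)).congr_deriv ?_
  simp only [Function.comp_apply, Pi.pow_apply]
  push_cast
  ring

lemma lagrangian_comp_eq_of_eulerLagrange (hM : Differentiable ℝ M) (hγ : ContDiff ℝ 2 γ)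
    (hEL : ∀ t ∈ Icc a b,
      M (γ t) * deriv (deriv γ) t + 1 / 2 * deriv M (γ t) * deriv γ t ^ 2 = 0) :
    ∀ t ∈ Icc a b, lagrangian M (γ t) (deriv γ t) = lagrangian M (γ a) (deriv γ a) := by
  have hγ' : ContDiff ℝ 1 (deriv γ) := hγ.iterate_deriv' 1 1
  have hderiv : ∀ t ∈ Icc a b, HasDerivAt (fun s => lagrangian M (γ s) (deriv γ s)) 0 t :=
    fun t ht => (hasDerivAt_lagrangian_comp (hM _) (hγ.differentiable (by norm_num) t)
      (hγ'.differentiable one_ne_zero t)).congr_deriv (by rw [hEL t ht, mul_zero])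
  exact constant_of_has_deriv_right_zero
    (fun t ht => (hderiv t ht).continuousAt.continuousWithinAt)
    fun t ht => (hderiv t (Ico_subset_Icc_self ht)).hasDerivWithinAt

lemma deriv_nonpos_of_antitoneOn_Icc (hab : a < b) (hγ : Differentiable ℝ γ)
    (hmono : AntitoneOn γ (Icc a b)) {t : ℝ} (ht : t ∈ Icc a b) : deriv γ t ≤ 0 :=
  (hγ t).derivWithin (uniqueDiffOn_Icc hab t ht) ▸ hmono.derivWithin_nonpos

lemma integral_deriv_mul_sqrt_comp (hM : Continuous M) (hγ : ContDiff ℝ 1 γ) (a b : ℝ) :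
    ∫ t in a..b, deriv γ t * √(M (γ t)) = ∫ u in γ a..γ b, √(M u) := by
  rw [← integral_comp_mul_deriv (fun t _ => (hγ.differentiable one_ne_zero t).hasDerivAt)
    (hγ.continuous_deriv le_rfl).continuousOn hM.sqrt]
  simp only [Function.comp_apply, mul_comm]

lemma integral_neg_deriv_mul_sqrt_le (hM : Continuous M) (hγ : ContDiff ℝ 1 γ) {c : ℝ}
    (hab : a ≤ b) (hc : ∀ t ∈ Icc a b, lagrangian M (γ t) (deriv γ t) ≤ c) :
    ∫ t in a..b, -(deriv γ t * √(M (γ t))) ≤ (b - a) * √(2 * c) := by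
  have hcont : Continuous fun t => -(deriv γ t * √(M (γ t))) :=
    ((hγ.continuous_deriv le_rfl).mul (hM.comp hγ.continuous).sqrt).neg
  have hpt : ∀ t ∈ Icc a b, -(deriv γ t * √(M (γ t))) ≤ √(2 * c) := fun t ht =>
    calc -(deriv γ t * √(M (γ t))) ≤ |deriv γ t| * √(M (γ t)) := by
          rw [← neg_mul]; exact mul_le_mul_of_nonneg_right (neg_le_abs _) (Real.sqrt_nonneg _)
      _ = √(2 * lagrangian M (γ t) (deriv γ t)) := (sqrt_two_mul_lagrangian _ _).symm
      _ ≤ √(2 * c) := Real.sqrt_le_sqrt (by linarith [hc t ht])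
  calc ∫ t in a..b, -(deriv γ t * √(M (γ t))) ≤ ∫ _ in a..b, √(2 * c) :=
        integral_mono_on hab (hcont.intervalIntegrable a b) intervalIntegrable_const hpt
    _ = (b - a) * √(2 * c) := by rw [integral_const, smul_eq_mul]

lemma integral_neg_deriv_mul_sqrt_eq {E : ℝ} (hab : a ≤ b) (hγ : ∀ t ∈ Icc a b, deriv γ t ≤ 0)
    (hE : ∀ t ∈ Icc a b, lagrangian M (γ t) (deriv γ t) = E) :
    ∫ t in a..b, -(deriv γ t * √(M (γ t))) = (b - a) * √(2 * E) := by
  have hpt : ∀ t ∈ uIcc a b, -(deriv γ t * √(M (γ t))) = √(2 * E) := by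
    intro t ht
    rw [uIcc_of_le hab] at ht
    rw [← hE t ht, sqrt_two_mul_lagrangian, abs_of_nonpos (hγ t ht), neg_mul]
  rw [integral_congr hpt, integral_const, smul_eq_mul]

end

theorem eulerLagrange_solution_minimizes_Einfty_general
    (τ γi γf : ℝ) (hτ : 0 < τ)
    (M : ℝ → ℝ) (hM : ContDiff ℝ 1 M) (hMpos : ∀ x, 0 < M x)
    (γ₀ : ℝ → ℝ) (hγ₀ : ContDiff ℝ 2 γ₀)
    (hmono₀ : StrictAntiOn γ₀ (Set.Icc (0 : ℝ) τ))
    (h00 : γ₀ 0 = γi) (h0τ : γ₀ τ = γf)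
    (hEL : ∀ t ∈ Set.Icc (0 : ℝ) τ,
      M (γ₀ t) * deriv (deriv γ₀) t
        + (1 / 2) * deriv M (γ₀ t) * (deriv γ₀ t) ^ 2 = 0)
    (γ : ℝ → ℝ) (hγ : ContDiff ℝ 1 γ)
    (hg0 : γ 0 = γi) (hgτ : γ τ = γf) :
    sSup ((fun t => (1 / 2) * M (γ₀ t) * (deriv γ₀ t) ^ 2) '' Set.Icc (0 : ℝ) τ)
      ≤ sSup ((fun t => (1 / 2) * M (γ t) * (deriv γ t) ^ 2) '' Set.Icc (0 : ℝ) τ) := by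
  change sSup ((fun t => lagrangian M (γ₀ t) (deriv γ₀ t)) '' Icc 0 τ)
    ≤ sSup ((fun t => lagrangian M (γ t) (deriv γ t)) '' Icc 0 τ)
  set c := sSup ((fun t => lagrangian M (γ t) (deriv γ t)) '' Icc 0 τ)
  have hconst := lagrangian_comp_eq_of_eulerLagrange (hM.differentiable one_ne_zero) hγ₀ hEL
  have hle_c : ∀ t ∈ Icc 0 τ, lagrangian M (γ t) (deriv γ t) ≤ c :=
    fun t ht => lagrangian_comp_le_sSup hM.continuous hγ ht
  have hderiv₀ : ∀ t ∈ Icc 0 τ, deriv γ₀ t ≤ 0 := fun t ht =>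
    deriv_nonpos_of_antitoneOn_Icc hτ (hγ₀.differentiable (by norm_num)) hmono₀.antitoneOn ht
  have hlength : τ * √(2 * lagrangian M (γ₀ 0) (deriv γ₀ 0)) ≤ τ * √(2 * c) := by
    calc τ * √(2 * lagrangian M (γ₀ 0) (deriv γ₀ 0))
        = ∫ t in 0..τ, -(deriv γ₀ t * √(M (γ₀ t))) := by
          rw [integral_neg_deriv_mul_sqrt_eq hτ.le hderiv₀ hconst, sub_zero]
      _ = ∫ t in 0..τ, -(deriv γ t * √(M (γ t))) := by
          rw [integral_neg, integral_neg, integral_deriv_mul_sqrt_comp hM.continuous hγ,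
            integral_deriv_mul_sqrt_comp hM.continuous (hγ₀.of_le (by norm_num)),
            h00, h0τ, hg0, hgτ]
      _ ≤ τ * √(2 * c) := by
          simpa using integral_neg_deriv_mul_sqrt_le hM.continuous hγ hτ.le hle_c
  have hc : 0 ≤ c := (lagrangian_nonneg (hMpos _).le _).trans (hle_c 0 (left_mem_Icc.2 hτ.le))
  have hE : lagrangian M (γ₀ 0) (deriv γ₀ 0) ≤ c := by
    have := (Real.sqrt_le_sqrt_iff (by linarith)).1 (le_of_mul_le_mul_left hlength hτ)
    linarith
  exact csSup_le ((nonempty_Icc.2 hτ.le).image _) fun _ ⟨t, ht, hEt⟩ =>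
    hEt ▸ (hconst t ht).trans_le hE

/-- For a positive C¹ mass function `M`, a C², strictly monotonically
decreasing solution `γ₀ : [0, τ] → ℝ` of the Euler–Lagrange equation
`M(γ₀) γ̈₀ + (1/2) M'(γ₀) γ̇₀² = 0` with `γ₀ 0 = γi`, `γ₀ τ = γf` minimizes the error
measure `E_∞[γ] = max_{t ∈ [0,τ]} (1/2) M(γ(t)) γ̇(t)²` among all C¹, strictly
monotonically decreasing curves with the same endpoints. -/
theorem eulerLagrange_solution_minimizes_Einfty
    (τ γi γf : ℝ) (hτ : 0 < τ) (hfi : γf < γi)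
    (M : ℝ → ℝ) (hM : ContDiff ℝ 1 M) (hMpos : ∀ x, 0 < M x)
    (γ₀ : ℝ → ℝ) (hγ₀ : ContDiff ℝ 2 γ₀)
    (hmono₀ : StrictAntiOn γ₀ (Set.Icc (0 : ℝ) τ))
    (h00 : γ₀ 0 = γi) (h0τ : γ₀ τ = γf)
    (hEL : ∀ t ∈ Set.Icc (0 : ℝ) τ,
      M (γ₀ t) * deriv (deriv γ₀) t
        + (1 / 2) * deriv M (γ₀ t) * (deriv γ₀ t) ^ 2 = 0)
    (γ : ℝ → ℝ) (hγ : ContDiff ℝ 1 γ)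
    (hmono : StrictAntiOn γ (Set.Icc (0 : ℝ) τ))
    (hg0 : γ 0 = γi) (hgτ : γ τ = γf) :
    sSup ((fun t => (1 / 2) * M (γ₀ t) * (deriv γ₀ t) ^ 2) '' Set.Icc (0 : ℝ) τ)
      ≤ sSup ((fun t => (1 / 2) * M (γ t) * (deriv γ t) ^ 2) '' Set.Icc (0 : ℝ) τ) :=
  eulerLagrange_solution_minimizes_Einfty_general τ γi γf hτ M hM hMpos γ₀ hγ₀ hmono₀ h00 h0τ hEL γ
    hγ hg0 hgτ
end

section
/- Fix c > 0, τ > 0 and 0 < Ω_τ < Ω₀. Define the hyperbolic ramp γ : [0,τ] → ℝ by γ(t) = (Ω₀⁻¹ + (Ω_τ⁻¹ − Ω₀⁻¹) t/τ)⁻¹, and let M(γ) = c γ⁻⁴. Then γ is C², strictly monotonically decreasing, γ(0) = Ω₀, γ(τ) = Ω_τ, γ satisfies the Euler–Lagrange equation M(γ) γ̈ + (1/2) M'(γ) γ̇² = 0, and the Lagrangian is constant along the curve: (1/2) M(γ(t)) γ̇(t)² = (c / (2τ²)) (Ω_τ⁻¹ − Ω₀⁻¹)² for all t ∈ [0,τ].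 -/
/-!
In the variable `y = γ⁻¹` the Lagrangian `(c/2) γ⁻⁴ γ̇²` becomes the free Lagrangian `(c/2) ẏ²`,
whose extremals are the affine functions `y(t) = a + b t`. Hence the reciprocal of an affine
function solves the Euler–Lagrange equation, and along it the Lagrangian equals `c b² / 2`;
the ramp is the affine interpolation of `Ω⁻¹` between `Ω₀⁻¹` and `Ωτ⁻¹`.
-/

open Set Topology

section InvAffine

variable {a b t : ℝ}

theorem hasDerivAt_inv_affine (h : a + b * t ≠ 0) :
    HasDerivAt (fun s => (a + b * s)⁻¹) (-b / (a + b * t) ^ 2) t := by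
  simpa using (((hasDerivAt_id t).const_mul b).const_add a).fun_inv h

theorem deriv_inv_affine_eventuallyEq (h : a + b * t ≠ 0) :
    deriv (fun s => (a + b * s)⁻¹) =ᶠ[𝓝 t] fun s => -b * (a + b * s)⁻¹ ^ 2 := by
  have hne : ∀ᶠ s in 𝓝 t, a + b * s ≠ 0 :=
    (continuous_const.add (continuous_const.mul continuous_id)).continuousAt.eventually_ne h
  filter_upwards [hne] with s hs
  rw [(hasDerivAt_inv_affine hs).deriv, div_eq_mul_inv, inv_pow]

theorem deriv_deriv_inv_affine (h : a + b * t ≠ 0) :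
    deriv (deriv fun s => (a + b * s)⁻¹) t = 2 * b ^ 2 / (a + b * t) ^ 3 := by
  rw [(deriv_inv_affine_eventuallyEq h).deriv_eq,
    (((hasDerivAt_inv_affine h).fun_pow 2).const_mul (-b)).deriv]
  norm_num
  field_simp

theorem contDiffOn_inv_affine {n : WithTop ℕ∞} :
    ContDiffOn ℝ n (fun s => (a + b * s)⁻¹) {s | a + b * s ≠ 0} :=
  (contDiff_const.add (contDiff_const.mul contDiff_id)).contDiffOn.inv fun _ hs => hs

theorem strictAntiOn_inv_affine (hb : 0 < b) :
    StrictAntiOn (fun s => (a + b * s)⁻¹) {s | 0 < a + b * s} := by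
  intro x hx y _ hxy
  have : a + b * x < a + b * y := by gcongr
  exact inv_strictAntiOn hx (lt_trans hx this) this

end InvAffine

theorem deriv_const_mul_inv_pow_four (c : ℝ) {x : ℝ} (hx : x ≠ 0) :
    deriv (fun y => c * (y ^ 4)⁻¹) x = -4 * c / x ^ 5 := by
  rw [(((hasDerivAt_pow 4 x).fun_inv (pow_ne_zero 4 hx)).const_mul c).deriv]
  field_simp
  ring

section EulerLagrange

variable (c : ℝ) {a b t : ℝ}

theorem eulerLagrange_inv_affine (h : a + b * t ≠ 0) :
    c * ((a + b * t)⁻¹ ^ 4)⁻¹ * deriv (deriv fun s => (a + b * s)⁻¹) t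
      + 1 / 2 * deriv (fun y => c * (y ^ 4)⁻¹) (a + b * t)⁻¹
        * deriv (fun s => (a + b * s)⁻¹) t ^ 2 = 0 := by
  rw [deriv_deriv_inv_affine h, deriv_const_mul_inv_pow_four c (inv_ne_zero h),
    (hasDerivAt_inv_affine h).deriv]
  field_simp
  ring

theorem lagrangian_inv_affine (h : a + b * t ≠ 0) :
    1 / 2 * (c * ((a + b * t)⁻¹ ^ 4)⁻¹) * deriv (fun s => (a + b * s)⁻¹) t ^ 2
      = c * b ^ 2 / 2 := by
  rw [(hasDerivAt_inv_affine h).deriv]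
  field_simp

end EulerLagrange

theorem hyperbolic_ramp_solves_eulerLagrange_general
    (c τ Ω₀ Ωτ : ℝ) (hτ : 0 < τ) (hΩτ : 0 < Ωτ) (hΩ : Ωτ < Ω₀)
    (γ M : ℝ → ℝ)
    (hγdef : γ = fun t => (Ω₀⁻¹ + (Ωτ⁻¹ - Ω₀⁻¹) * (t / τ))⁻¹)
    (hMdef : M = fun x => c * (x ^ 4)⁻¹) :
    ContDiffOn ℝ 2 γ (Set.Icc (0 : ℝ) τ)
    ∧ StrictAntiOn γ (Set.Icc (0 : ℝ) τ)
    ∧ γ 0 = Ω₀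
    ∧ γ τ = Ωτ
    ∧ (∀ t ∈ Set.Icc (0 : ℝ) τ,
        M (γ t) * deriv (deriv γ) t
          + (1 / 2) * deriv M (γ t) * (deriv γ t) ^ 2 = 0)
    ∧ (∀ t ∈ Set.Icc (0 : ℝ) τ,
        (1 / 2) * M (γ t) * (deriv γ t) ^ 2
          = (c / (2 * τ ^ 2)) * (Ωτ⁻¹ - Ω₀⁻¹) ^ 2) := by
  have hΩ₀ : 0 < Ω₀ := hΩτ.trans hΩ
  set b := (Ωτ⁻¹ - Ω₀⁻¹) / τ with hb
  have hb_pos : 0 < b := div_pos (sub_pos.2 (inv_strictAntiOn hΩτ hΩ₀ hΩ)) hτ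
  have hpos : ∀ t ∈ Icc 0 τ, 0 < Ω₀⁻¹ + b * t := fun t ht =>
    add_pos_of_pos_of_nonneg (inv_pos.2 hΩ₀) (mul_nonneg hb_pos.le ht.1)
  obtain rfl : γ = fun t => (Ω₀⁻¹ + b * t)⁻¹ := by
    rw [hγdef, hb]; funext t; ring
  subst hMdef
  refine ⟨contDiffOn_inv_affine.mono fun t ht => (hpos t ht).ne',
    (strictAntiOn_inv_affine hb_pos).mono hpos, by simp, ?_,
    fun t ht => eulerLagrange_inv_affine c (hpos t ht).ne', fun t ht => ?_⟩
  · simp only [hb]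
    field_simp
    rw [add_sub_cancel, div_self hΩ₀.ne']
  · rw [lagrangian_inv_affine c (hpos t ht).ne', hb]
    field_simp

/-- For `c > 0`, `τ > 0`, `0 < Ωτ < Ω₀`, the hyperbolic ramp
`γ(t) = (Ω₀⁻¹ + (Ωτ⁻¹ − Ω₀⁻¹) t/τ)⁻¹` with atomic-limit mass function `M(γ) = c γ⁻⁴`
is C² on `[0, τ]`, strictly monotonically decreasing, has `γ(0) = Ω₀`, `γ(τ) = Ωτ`,
satisfies the Euler–Lagrange equation `M(γ) γ̈ + (1/2) M'(γ) γ̇² = 0`, and the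
Lagrangian is constant along it:
`(1/2) M(γ(t)) γ̇(t)² = (c/(2τ²)) (Ωτ⁻¹ − Ω₀⁻¹)²` for all `t ∈ [0, τ]`. -/
theorem hyperbolic_ramp_solves_eulerLagrange
    (c τ Ω₀ Ωτ : ℝ) (hc : 0 < c) (hτ : 0 < τ) (hΩτ : 0 < Ωτ) (hΩ : Ωτ < Ω₀)
    (γ M : ℝ → ℝ)
    (hγdef : γ = fun t => (Ω₀⁻¹ + (Ωτ⁻¹ - Ω₀⁻¹) * (t / τ))⁻¹)
    (hMdef : M = fun x => c * (x ^ 4)⁻¹) :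
    ContDiffOn ℝ 2 γ (Set.Icc (0 : ℝ) τ)
    ∧ StrictAntiOn γ (Set.Icc (0 : ℝ) τ)
    ∧ γ 0 = Ω₀
    ∧ γ τ = Ωτ
    ∧ (∀ t ∈ Set.Icc (0 : ℝ) τ,
        M (γ t) * deriv (deriv γ) t
          + (1 / 2) * deriv M (γ t) * (deriv γ t) ^ 2 = 0)
    ∧ (∀ t ∈ Set.Icc (0 : ℝ) τ,
        (1 / 2) * M (γ t) * (deriv γ t) ^ 2
          = (c / (2 * τ ^ 2)) * (Ωτ⁻¹ - Ω₀⁻¹) ^ 2) :=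
  hyperbolic_ramp_solves_eulerLagrange_general c τ Ω₀ Ωτ hτ hΩτ hΩ γ M hγdef hMdef
end

section
/- Fix c > 0, τ > 0 and 0 < Ω_τ < Ω₀, and let M(γ) = c γ⁻⁴. Then every C¹, strictly monotonically decreasing curve γ : [0,τ] → (0,∞) with γ(0) = Ω₀ and γ(τ) = Ω_τ satisfies max_{t ∈ [0,τ]} (1/2) M(γ(t)) γ̇(t)² ≥ (c / (2τ²)) (Ω_τ⁻¹ − Ω₀⁻¹)², and the hyperbolic ramp γ(t) = (Ω₀⁻¹ + (Ω_τ⁻¹ − Ω₀⁻¹) t/τ)⁻¹ achieves equality. In particular, the hyperbolic ramp minimizes the error measure E_∞ for the atomic-limit mass function. -/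
/-!
Along a curve with `γ ≠ 0` the atomic-limit Lagrangian `(c/2) γ⁻⁴ γ̇²` equals `(c/2) ((γ⁻¹)˙)²`.
By the mean value theorem `γ⁻¹` has, somewhere in `(0, τ)`, slope `(Ωτ⁻¹ - Ω₀⁻¹)/τ`, which gives
the lower bound on the maximum; the hyperbolic ramp is exactly the curve with `γ⁻¹` affine, so its
Lagrangian is constant and equal to that bound.
-/

open Set

noncomputable section

def atomicLagrangian (c : ℝ) (γ : ℝ → ℝ) (t : ℝ) : ℝ :=
  1 / 2 * (c * (γ t ^ 4)⁻¹) * deriv γ t ^ 2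

variable (c : ℝ) {γ : ℝ → ℝ}

theorem atomicLagrangian_eq_of_hasDerivAt_inv {k t : ℝ}
    (hγ : HasDerivAt (fun s => (γ s)⁻¹) k t) (hγt : γ t ≠ 0) :
    atomicLagrangian c γ t = c / 2 * k ^ 2 := by
  have hderiv : deriv γ t = -k / ((γ t)⁻¹) ^ 2 := by
    simpa only [Pi.inv_def, inv_inv] using (hγ.inv (inv_ne_zero hγt)).deriv
  rw [atomicLagrangian, hderiv]
  field_simp

theorem inv_slope_sq_le_sSup_atomicLagrangian {a b : ℝ} (hab : a < b)
    (hγ : ContDiff ℝ 1 γ) (hγ0 : ∀ t ∈ Icc a b, γ t ≠ 0) :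
    c / 2 * (((γ b)⁻¹ - (γ a)⁻¹) / (b - a)) ^ 2 ≤ sSup (atomicLagrangian c γ '' Icc a b) := by
  have hdiff : Differentiable ℝ γ := hγ.differentiable one_ne_zero
  have hinv : ∀ t ∈ Icc a b,
      HasDerivAt (fun s => (γ s)⁻¹) (deriv (fun s => (γ s)⁻¹) t) t := fun t ht =>
    ((hdiff t).inv (hγ0 t ht)).hasDerivAt
  obtain ⟨x, hx, hslope⟩ := exists_hasDerivAt_eq_slope (fun s => (γ s)⁻¹) _ hab
    (hγ.continuous.continuousOn.inv₀ hγ0) fun t ht => hinv t (Ioo_subset_Icc_self ht)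
  have hcont : ContinuousOn (atomicLagrangian c γ) (Icc a b) := by
    have hγ' := (hγ.continuous_deriv le_rfl).continuousOn (s := Icc a b)
    have hγ4 := (hγ.continuous.continuousOn.pow 4).inv₀ fun t ht => pow_ne_zero 4 (hγ0 t ht)
    exact (continuousOn_const.mul (continuousOn_const.mul hγ4)).mul (hγ'.pow 2)
  have hxIcc : x ∈ Icc a b := Ioo_subset_Icc_self hx
  calc c / 2 * (((γ b)⁻¹ - (γ a)⁻¹) / (b - a)) ^ 2 = atomicLagrangian c γ x := by
        rw [← hslope, atomicLagrangian_eq_of_hasDerivAt_inv c (hinv x hxIcc) (hγ0 x hxIcc)]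
    _ ≤ sSup (atomicLagrangian c γ '' Icc a b) :=
        le_csSup (isCompact_Icc.bddAbove_image hcont) (mem_image_of_mem _ hxIcc)

theorem sSup_atomicLagrangian_eq_of_hasDerivAt_inv {s : Set ℝ} (hs : s.Nonempty) {k : ℝ}
    (hγ : ∀ t ∈ s, HasDerivAt (fun u => (γ u)⁻¹) k t) (hγ0 : ∀ t ∈ s, γ t ≠ 0) :
    sSup (atomicLagrangian c γ '' s) = c / 2 * k ^ 2 := by
  rw [image_congr fun t ht => atomicLagrangian_eq_of_hasDerivAt_inv c (hγ t ht) (hγ0 t ht),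
    hs.image_const, csSup_singleton]

end

theorem hyperbolic_ramp_minimizes_Einfty_atomic_limit_general
    (c τ Ω₀ Ωτ : ℝ) (hτ : 0 < τ) (hΩτ : 0 < Ωτ) (hΩ : Ωτ < Ω₀) :
    (∀ γ : ℝ → ℝ, ContDiff ℝ 1 γ → StrictAntiOn γ (Set.Icc (0 : ℝ) τ) →
      (∀ t ∈ Set.Icc (0 : ℝ) τ, 0 < γ t) → γ 0 = Ω₀ → γ τ = Ωτ →
      (c / (2 * τ ^ 2)) * (Ωτ⁻¹ - Ω₀⁻¹) ^ 2
        ≤ sSup ((fun t => (1 / 2) * (c * ((γ t) ^ 4)⁻¹) * (deriv γ t) ^ 2) ''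
            Set.Icc (0 : ℝ) τ))
    ∧ sSup ((fun t =>
          (1 / 2) * (c * (((fun s => (Ω₀⁻¹ + (Ωτ⁻¹ - Ω₀⁻¹) * (s / τ))⁻¹) t) ^ 4)⁻¹)
            * (deriv (fun s => (Ω₀⁻¹ + (Ωτ⁻¹ - Ω₀⁻¹) * (s / τ))⁻¹) t) ^ 2) ''
          Set.Icc (0 : ℝ) τ)
        = (c / (2 * τ ^ 2)) * (Ωτ⁻¹ - Ω₀⁻¹) ^ 2 := by
  have hbound : c / (2 * τ ^ 2) * (Ωτ⁻¹ - Ω₀⁻¹) ^ 2 = c / 2 * ((Ωτ⁻¹ - Ω₀⁻¹) / τ) ^ 2 := by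
    field_simp
  refine ⟨fun γ hγ _ hpos h0 hτγ => ?_, ?_⟩
  · have := inv_slope_sq_le_sSup_atomicLagrangian c hτ hγ fun t ht => (hpos t ht).ne'
    rwa [h0, hτγ, sub_zero, ← hbound] at this
  · set d := Ωτ⁻¹ - Ω₀⁻¹
    have hd : 0 ≤ d := sub_nonneg.mpr (inv_anti₀ hΩτ hΩ.le)
    have hramp : ∀ t ∈ Icc 0 τ, 0 < Ω₀⁻¹ + d * (t / τ) := fun t ht => by
      have ht' : 0 ≤ t / τ := div_nonneg ht.1 hτ.le
      have hΩ₀ : 0 < Ω₀ := hΩτ.trans hΩ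
      positivity
    have hinv : ∀ t, HasDerivAt (fun s => ((Ω₀⁻¹ + d * (s / τ))⁻¹)⁻¹) (d / τ) t := fun t => by
      simpa only [inv_inv, id, mul_one_div] using
        (((hasDerivAt_id t).div_const τ).const_mul d).const_add Ω₀⁻¹
    rw [hbound]
    exact sSup_atomicLagrangian_eq_of_hasDerivAt_inv c ⟨0, left_mem_Icc.mpr hτ.le⟩
      (fun t _ => hinv t) fun t ht => (inv_pos.mpr (hramp t ht)).ne'

/-- For the atomic-limit mass function `M(γ) = c γ⁻⁴` (`c > 0`) and
`0 < Ωτ < Ω₀`, every C¹, strictly monotonically decreasing curve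
`γ : [0, τ] → (0, ∞)` with `γ(0) = Ω₀`, `γ(τ) = Ωτ` satisfies
`max_{t ∈ [0,τ]} (1/2) M(γ(t)) γ̇(t)² ≥ (c/(2τ²)) (Ωτ⁻¹ − Ω₀⁻¹)²`, and the hyperbolic
ramp `γ(t) = (Ω₀⁻¹ + (Ωτ⁻¹ − Ω₀⁻¹) t/τ)⁻¹` achieves equality; it minimizes `E_∞`. -/
theorem hyperbolic_ramp_minimizes_Einfty_atomic_limit
    (c τ Ω₀ Ωτ : ℝ) (hc : 0 < c) (hτ : 0 < τ) (hΩτ : 0 < Ωτ) (hΩ : Ωτ < Ω₀) :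
    (∀ γ : ℝ → ℝ, ContDiff ℝ 1 γ → StrictAntiOn γ (Set.Icc (0 : ℝ) τ) →
      (∀ t ∈ Set.Icc (0 : ℝ) τ, 0 < γ t) → γ 0 = Ω₀ → γ τ = Ωτ →
      (c / (2 * τ ^ 2)) * (Ωτ⁻¹ - Ω₀⁻¹) ^ 2
        ≤ sSup ((fun t => (1 / 2) * (c * ((γ t) ^ 4)⁻¹) * (deriv γ t) ^ 2) ''
            Set.Icc (0 : ℝ) τ))
    ∧ sSup ((fun t =>
          (1 / 2) * (c * (((fun s => (Ω₀⁻¹ + (Ωτ⁻¹ - Ω₀⁻¹) * (s / τ))⁻¹) t) ^ 4)⁻¹)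
            * (deriv (fun s => (Ω₀⁻¹ + (Ωτ⁻¹ - Ω₀⁻¹) * (s / τ))⁻¹) t) ^ 2) ''
          Set.Icc (0 : ℝ) τ)
        = (c / (2 * τ ^ 2)) * (Ωτ⁻¹ - Ω₀⁻¹) ^ 2 :=
  hyperbolic_ramp_minimizes_Einfty_atomic_limit_general c τ Ω₀ Ωτ hτ hΩτ hΩ
end

section
/- Fix a number of sites M_s > 0, τ > 0, and for each l ∈ {1,2,3} frequencies 0 < Ω_{lτ} < Ω_{l0}. Define the three-component hyperbolic ramp γ_l(t) = (Ω_{l0}⁻¹ + (Ω_{lτ}⁻¹ − Ω_{l0}⁻¹) t/τ)⁻¹ and the atomic-limit Lagrangian L_al(t) = Σ_{l=1}^{3} (1/2) M_s (2 γ_l(t))⁻⁴ γ̇_l(t)². Then L_al(t) is constant in t and equals (M_s / (32 τ²)) Σ_{l=1}^{3} (Ω_{lτ}⁻¹ − Ω_{l0}⁻¹)². In particular, for this ramp the cumulative adiabatic error in the atomic limit is E_∞^al = (M_s / (32 τ²)) Σ_l (Ω_{lτ}⁻¹ − Ω_{l0}⁻¹)², which is inversely proportional to the square of the ramp duration τ.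 -/
/-!
In the coordinate `u = γ⁻¹` the atomic-limit mass `M (2γ)⁻⁴` becomes flat: since `γ̇ = -u̇ / u²`,
the term `(1/2) M (2γ)⁻⁴ γ̇²` equals `M u̇² / 32`. The hyperbolic ramp is exactly the ramp along
which `u` moves linearly, from `Ω₀⁻¹` to `Ωτ⁻¹` with speed `(Ωτ⁻¹ - Ω₀⁻¹) / τ`, so the
Lagrangian is constant and its supremum over `[0, τ]` is that constant.
-/

open Set

noncomputable def atomicLimitLagrangian (M : ℝ) (γ : ℝ → ℝ) (t : ℝ) : ℝ :=
  1 / 2 * M * ((2 * γ t) ^ 4)⁻¹ * deriv γ t ^ 2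

theorem atomicLimitLagrangian_inv (M : ℝ) {u : ℝ → ℝ} {u' t : ℝ} (hu : HasDerivAt u u' t)
    (ht : u t ≠ 0) :
    atomicLimitLagrangian M (fun s => (u s)⁻¹) t = M * u' ^ 2 / 32 := by
  rw [atomicLimitLagrangian, (hu.fun_inv ht).deriv]
  field_simp
  ring

theorem add_sub_mul_pos {x y s : ℝ} (hx : 0 < x) (hy : 0 < y) (hs : s ∈ Icc (0 : ℝ) 1) :
    0 < x + (y - x) * s := by
  obtain ⟨hs₀, hs₁⟩ := hs
  nlinarith [mul_nonneg hx.le (sub_nonneg.2 hs₁), mul_nonneg hy.le hs₀]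

theorem atomic_limit_hyperbolic_ramp_error_general
    (Ms τ : ℝ) (hτ : 0 < τ)
    (Ω₀ Ωτ : Fin 3 → ℝ) (hΩτ : ∀ l, 0 < Ωτ l) (hΩ : ∀ l, Ωτ l < Ω₀ l)
    (γ : Fin 3 → ℝ → ℝ)
    (hγdef : ∀ l, γ l = fun t => ((Ω₀ l)⁻¹ + ((Ωτ l)⁻¹ - (Ω₀ l)⁻¹) * (t / τ))⁻¹) :
    (∀ t ∈ Set.Icc (0 : ℝ) τ,
      ∑ l : Fin 3, (1 / 2) * Ms * ((2 * γ l t) ^ 4)⁻¹ * (deriv (γ l) t) ^ 2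
        = (Ms / (32 * τ ^ 2)) * ∑ l : Fin 3, ((Ωτ l)⁻¹ - (Ω₀ l)⁻¹) ^ 2)
    ∧ sSup ((fun t =>
          ∑ l : Fin 3, (1 / 2) * Ms * ((2 * γ l t) ^ 4)⁻¹ * (deriv (γ l) t) ^ 2) ''
          Set.Icc (0 : ℝ) τ)
        = (Ms / (32 * τ ^ 2)) * ∑ l : Fin 3, ((Ωτ l)⁻¹ - (Ω₀ l)⁻¹) ^ 2 := by
  have hconst : ∀ t ∈ Icc (0 : ℝ) τ,
      ∑ l : Fin 3, atomicLimitLagrangian Ms (γ l) t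
        = (Ms / (32 * τ ^ 2)) * ∑ l : Fin 3, ((Ωτ l)⁻¹ - (Ω₀ l)⁻¹) ^ 2 := by
    intro t ht
    rw [Finset.mul_sum]
    refine Finset.sum_congr rfl fun l _ => ?_
    have hslope : HasDerivAt (fun s => (Ω₀ l)⁻¹ + ((Ωτ l)⁻¹ - (Ω₀ l)⁻¹) * (s / τ))
        (((Ωτ l)⁻¹ - (Ω₀ l)⁻¹) / τ) t := by
      simpa [div_eq_mul_inv] using (((hasDerivAt_id t).div_const τ).const_mul
        ((Ωτ l)⁻¹ - (Ω₀ l)⁻¹)).const_add (Ω₀ l)⁻¹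
    have hpos : 0 < (Ω₀ l)⁻¹ + ((Ωτ l)⁻¹ - (Ω₀ l)⁻¹) * (t / τ) :=
      add_sub_mul_pos (inv_pos.2 ((hΩτ l).trans (hΩ l))) (inv_pos.2 (hΩτ l))
        ⟨div_nonneg ht.1 hτ.le, div_le_one_of_le₀ ht.2 hτ.le⟩
    rw [hγdef l, atomicLimitLagrangian_inv Ms hslope hpos.ne']
    field_simp
  refine ⟨hconst, ?_⟩
  change sSup ((fun t => ∑ l : Fin 3, atomicLimitLagrangian Ms (γ l) t) '' Icc 0 τ) = _
  rw [EqOn.image_eq hconst, (nonempty_Icc.2 hτ.le).image_const, csSup_singleton]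

/-- For `Ms > 0` sites, `τ > 0`, and frequencies `0 < Ωτ l < Ω₀ l`
for each of the three directions `l`, the three-component hyperbolic ramp
`γ l t = ((Ω₀ l)⁻¹ + ((Ωτ l)⁻¹ − (Ω₀ l)⁻¹) t/τ)⁻¹` renders the atomic-limit Lagrangian
`L_al(t) = Σ_l (1/2) Ms (2 γ l t)⁻⁴ (γ̇ l t)²` constant in `t`, equal to
`(Ms/(32 τ²)) Σ_l ((Ωτ l)⁻¹ − (Ω₀ l)⁻¹)²`; hence the cumulative adiabatic error
`E_∞^al = max_t L_al(t)` equals this value, inversely proportional to `τ²`. -/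
theorem atomic_limit_hyperbolic_ramp_error
    (Ms τ : ℝ) (hMs : 0 < Ms) (hτ : 0 < τ)
    (Ω₀ Ωτ : Fin 3 → ℝ) (hΩτ : ∀ l, 0 < Ωτ l) (hΩ : ∀ l, Ωτ l < Ω₀ l)
    (γ : Fin 3 → ℝ → ℝ)
    (hγdef : ∀ l, γ l = fun t => ((Ω₀ l)⁻¹ + ((Ωτ l)⁻¹ - (Ω₀ l)⁻¹) * (t / τ))⁻¹) :
    (∀ t ∈ Set.Icc (0 : ℝ) τ,
      ∑ l : Fin 3, (1 / 2) * Ms * ((2 * γ l t) ^ 4)⁻¹ * (deriv (γ l) t) ^ 2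
        = (Ms / (32 * τ ^ 2)) * ∑ l : Fin 3, ((Ωτ l)⁻¹ - (Ω₀ l)⁻¹) ^ 2)
    ∧ sSup ((fun t =>
          ∑ l : Fin 3, (1 / 2) * Ms * ((2 * γ l t) ^ 4)⁻¹ * (deriv (γ l) t) ^ 2) ''
          Set.Icc (0 : ℝ) τ)
        = (Ms / (32 * τ ^ 2)) * ∑ l : Fin 3, ((Ωτ l)⁻¹ - (Ω₀ l)⁻¹) ^ 2 :=
  atomic_limit_hyperbolic_ramp_error_general Ms τ hτ Ω₀ Ωτ hΩτ hΩ γ hγdef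
end

section
/- Fix constants C > 0, b > 0, c > 0 and t₀ ∈ ℝ, and define M(γ) = (C/γ) exp(−b √γ) for γ > 0. Let γ(t) = (4/b²) (ln(c (t − t₀)))² on any interval of t with 0 < c (t − t₀) < 1. Then M(γ(t)) γ̇(t)² = 16 C c² / b² is constant in t; consequently γ satisfies the Euler–Lagrange equation M(γ) γ̈ + (1/2) M'(γ) γ̇² = 0 on that interval, so the optimal adiabatic ramp for a mass function of the form (C/γ) e^{−b√γ} is a squared-logarithm ramp. -/
/-!
Along a solution of the Euler–Lagrange equation the Lagrangian `M(γ) γ̇² / 2` is conserved, and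
conversely, differentiating a conserved Lagrangian gives `γ̇ (2 M(γ) γ̈ + M'(γ) γ̇²) = 0`, which is
the Euler–Lagrange equation wherever `γ̇ ≠ 0`. For the squared-logarithm ramp with `u = c (t - t₀)`
one has `√γ = -2 log u / b`, so `exp (-b √γ) = u²` and `M(γ) = C b² u² / (4 log² u)`, while
`γ̇ = 8 c log u / (b² u)`; their product `M(γ) γ̇² = 16 C c² / b²` no longer depends on `t`.
-/

open Real Filter Topology

theorem euler_lagrange_of_eventually_const_lagrangian {M γ : ℝ → ℝ} {t E : ℝ}
    (hM : DifferentiableAt ℝ M (γ t)) (hγ : DifferentiableAt ℝ γ t)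
    (hγ' : DifferentiableAt ℝ (deriv γ) t) (hv : deriv γ t ≠ 0)
    (hE : (fun s => M (γ s) * deriv γ s ^ 2) =ᶠ[𝓝 t] fun _ => E) :
    M (γ t) * deriv (deriv γ) t + 1 / 2 * deriv M (γ t) * deriv γ t ^ 2 = 0 := by
  have hL : HasDerivAt (fun s => M (γ s) * deriv γ s ^ 2)
      (deriv M (γ t) * deriv γ t * deriv γ t ^ 2
        + M (γ t) * ((2 : ℕ) * deriv γ t ^ (2 - 1) * deriv (deriv γ) t)) t :=
    (hM.hasDerivAt.comp t hγ.hasDerivAt).mul (hγ'.hasDerivAt.pow 2)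
  have hL0 : deriv (fun s => M (γ s) * deriv γ s ^ 2) t = 0 := by
    rw [hE.deriv_eq, deriv_const]
  rw [hL.deriv] at hL0
  have : 2 * deriv γ t
      * (M (γ t) * deriv (deriv γ) t + 1 / 2 * deriv M (γ t) * deriv γ t ^ 2) = 0 := by
    rw [← hL0]; push_cast; ring
  exact (mul_eq_zero.mp this).resolve_left (mul_ne_zero two_ne_zero hv)

theorem exp_neg_mul_sqrt_sq_log {b u : ℝ} (hb : 0 < b) (hu0 : 0 < u) (hu1 : u ≤ 1) :
    exp (-b * √(4 / b ^ 2 * log u ^ 2)) = u ^ 2 := by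
  have hsqrt : √(4 / b ^ 2 * log u ^ 2) = -2 * log u / b := by
    rw [show 4 / b ^ 2 * log u ^ 2 = (-2 * log u / b) ^ 2 by ring]
    exact sqrt_sq (div_nonneg (by nlinarith [log_nonpos hu0.le hu1]) hb.le)
  rw [hsqrt, show -b * (-2 * log u / b) = 2 * log u by field_simp, two_mul, exp_add,
    exp_log hu0, sq]

section SquaredLogRamp

variable {a c t₀ : ℝ}

theorem hasDerivAt_mul_log_sq {s : ℝ} (hs : c * (s - t₀) ≠ 0) :
    HasDerivAt (fun s => a * log (c * (s - t₀)) ^ 2)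
      (2 * a * log (c * (s - t₀)) / (s - t₀)) s := by
  have hlin : HasDerivAt (fun s => c * (s - t₀)) c s := by
    simpa using ((hasDerivAt_id s).sub_const t₀).const_mul c
  refine (((hlin.log hs).pow 2).const_mul a).congr_deriv ?_
  obtain ⟨hc, hst⟩ := mul_ne_zero_iff.mp hs
  field_simp
  push_cast
  ring

theorem deriv_mul_log_sq_eventuallyEq {t : ℝ} (ht : c * (t - t₀) ≠ 0) :
    deriv (fun s => a * log (c * (s - t₀)) ^ 2)
      =ᶠ[𝓝 t] fun s => 2 * a * log (c * (s - t₀)) / (s - t₀) := by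
  filter_upwards [(continuous_const.mul (continuous_id.sub continuous_const)).continuousAt
    |>.eventually_ne ht] with s hs
  exact (hasDerivAt_mul_log_sq hs).deriv

theorem differentiableAt_deriv_mul_log_sq {t : ℝ} (ht : c * (t - t₀) ≠ 0) :
    DifferentiableAt ℝ (deriv fun s => a * log (c * (s - t₀)) ^ 2) t := by
  have : t - t₀ ≠ 0 := right_ne_zero_of_mul ht
  refine DifferentiableAt.congr_of_eventuallyEq ?_ (deriv_mul_log_sq_eventuallyEq ht)
  fun_prop (disch := assumption)

end SquaredLogRamp

theorem mass_mul_deriv_sq_of_sq_log_ramp {C b c t₀ s : ℝ} (hb : 0 < b)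
    (hs0 : 0 < c * (s - t₀)) (hs1 : c * (s - t₀) < 1) :
    C / (4 / b ^ 2 * log (c * (s - t₀)) ^ 2)
        * exp (-b * √(4 / b ^ 2 * log (c * (s - t₀)) ^ 2))
        * deriv (fun s => 4 / b ^ 2 * log (c * (s - t₀)) ^ 2) s ^ 2
      = 16 * C * c ^ 2 / b ^ 2 := by
  have hlog : log (c * (s - t₀)) ≠ 0 := (log_neg hs0 hs1).ne
  have hst : s - t₀ ≠ 0 := right_ne_zero_of_mul hs0.ne'
  rw [exp_neg_mul_sqrt_sq_log hb hs0 hs1.le, (hasDerivAt_mul_log_sq hs0.ne').deriv]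
  field_simp
  ring

theorem squared_log_ramp_optimal_general
    (C b c t₀ : ℝ) (hb : 0 < b)
    (M γ : ℝ → ℝ)
    (hMdef : M = fun x => (C / x) * Real.exp (-b * Real.sqrt x))
    (hγdef : γ = fun t => (4 / b ^ 2) * (Real.log (c * (t - t₀))) ^ 2) :
    ∀ t : ℝ, 0 < c * (t - t₀) → c * (t - t₀) < 1 →
      M (γ t) * (deriv γ t) ^ 2 = 16 * C * c ^ 2 / b ^ 2
      ∧ M (γ t) * deriv (deriv γ) t
          + (1 / 2) * deriv M (γ t) * (deriv γ t) ^ 2 = 0 := by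
  intro t ht0 ht1
  have hlog : log (c * (t - t₀)) ≠ 0 := (log_neg ht0 ht1).ne
  have hconst : (fun s => M (γ s) * deriv γ s ^ 2) =ᶠ[𝓝 t] fun _ => 16 * C * c ^ 2 / b ^ 2 := by
    subst hMdef hγdef
    have hnhds : {s | c * (s - t₀) ∈ Set.Ioo 0 1} ∈ 𝓝 t :=
      (isOpen_Ioo.preimage (by fun_prop)).mem_nhds ⟨ht0, ht1⟩
    filter_upwards [hnhds] with s hs
    exact mass_mul_deriv_sq_of_sq_log_ramp hb hs.1 hs.2
  have hM : DifferentiableAt ℝ M (γ t) := by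
    subst hMdef hγdef
    have hγt : 4 / b ^ 2 * log (c * (t - t₀)) ^ 2 ≠ 0 := by positivity
    fun_prop (disch := assumption)
  have hv : deriv γ t ≠ 0 := by
    rw [hγdef, (hasDerivAt_mul_log_sq ht0.ne').deriv]
    exact div_ne_zero (by positivity) (right_ne_zero_of_mul ht0.ne')
  exact ⟨hconst.eq_of_nhds, euler_lagrange_of_eventually_const_lagrangian hM
    (hγdef ▸ (hasDerivAt_mul_log_sq ht0.ne').differentiableAt)
    (hγdef ▸ differentiableAt_deriv_mul_log_sq ht0.ne') hv hconst⟩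

/-- For `C, b, c > 0`, `t₀ ∈ ℝ`, the mass function
`M(γ) = (C/γ) exp(−b √γ)` and the squared-logarithm ramp
`γ(t) = (4/b²) (ln(c (t − t₀)))²` on any interval with `0 < c (t − t₀) < 1`:
`M(γ(t)) γ̇(t)² = 16 C c²/b²` is constant in `t`, and consequently `γ` satisfies the
Euler–Lagrange equation `M(γ) γ̈ + (1/2) M'(γ) γ̇² = 0` there:  the optimal adiabatic
ramp for such a mass function is a squared-logarithm ramp. -/
theorem squared_log_ramp_optimal
    (C b c t₀ : ℝ) (hC : 0 < C) (hb : 0 < b) (hc : 0 < c)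
    (M γ : ℝ → ℝ)
    (hMdef : M = fun x => (C / x) * Real.exp (-b * Real.sqrt x))
    (hγdef : γ = fun t => (4 / b ^ 2) * (Real.log (c * (t - t₀))) ^ 2) :
    ∀ t : ℝ, 0 < c * (t - t₀) → c * (t - t₀) < 1 →
      M (γ t) * (deriv γ t) ^ 2 = 16 * C * c ^ 2 / b ^ 2
      ∧ M (γ t) * deriv (deriv γ) t
          + (1 / 2) * deriv M (γ t) * (deriv γ t) ^ 2 = 0 :=
  squared_log_ramp_optimal_general C b c t₀ hb M γ hMdef hγdef
end

section
/- Fix ħ > 0, m > 0, w > 0 and 𝒱 > ħ²/(m w²), and define E : (0,∞) → ℝ by E(a) = ħ²/(2 m a²) − 𝒱 w²/(w² + 2a²). Then E has a unique critical point on (0,∞), located at a_⊥ with a_⊥² = ħ w² / (2 (w √(m 𝒱) − ħ)), equivalently a_⊥ = w / √(2 w √(m 𝒱)/ħ − 2), and this critical point is the global minimum of E on (0,∞). -/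
/-!
With `ζ = 1 + w² / (2 a²)` and `κ = ℏ² / (m w²)` the energy becomes
`E(a) = κ ζ + 𝒱 / ζ - (κ + 𝒱)`, and `ζ` is injective on `(0, ∞)` with `ζ' ≠ 0` there.
The function `ζ ↦ κ ζ + 𝒱 / ζ` has its only critical point on `(0, ∞)` at
`ζ₀ = √(𝒱 / κ) = w √(m 𝒱) / ℏ`, which is its global minimum there since
`κ ζ + 𝒱 / ζ - (κ ζ₀ + 𝒱 / ζ₀) = κ (ζ - ζ₀)² / ζ`, and `ζ₀ > 1` is exactly the hypothesis `κ < 𝒱`. Pulling back along `ζ` gives the critical point and minimum of `E`.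
-/

open Real

section MulAddDiv

variable {p q z z₀ : ℝ}

theorem hasDerivAt_mul_add_div (p q : ℝ) (hz : z ≠ 0) :
    HasDerivAt (fun z => p * z + q / z) (p - q / z ^ 2) z := by
  have h := ((hasDerivAt_id' z).const_mul p).fun_add ((hasDerivAt_inv hz).const_mul q)
  simp only [← div_eq_mul_inv] at h
  exact h.congr_deriv (by ring)

theorem sub_div_sq_eq_zero_iff (hp : p ≠ 0) (hz : 0 < z) (hz₀ : 0 < z₀) (h : p * z₀ ^ 2 = q) :
    p - q / z ^ 2 = 0 ↔ z = z₀ := by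
  rw [sub_eq_zero, eq_div_iff (by positivity), ← h, mul_right_inj' hp,
    sq_eq_sq₀ hz.le hz₀.le]

theorem mul_add_div_le_mul_add_div (hp : 0 ≤ p) (hz : 0 < z)
    (h : p * z₀ ^ 2 = q) : p * z₀ + q / z₀ ≤ p * z + q / z := by
  have hdiff : p * z + q / z - (p * z₀ + q / z₀) = p * (z - z₀) ^ 2 / z := by
    subst h
    field_simp
    ring
  have : 0 ≤ p * (z - z₀) ^ 2 / z := by positivity
  linarith

end MulAddDiv

noncomputable def waistRatio (w a : ℝ) : ℝ := 1 + w ^ 2 / (2 * a ^ 2)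

section WaistRatio

variable {w a : ℝ}

theorem waistRatio_pos (w a : ℝ) : 0 < waistRatio w a := by
  unfold waistRatio; positivity

theorem hasDerivAt_waistRatio (w : ℝ) (ha : a ≠ 0) :
    HasDerivAt (waistRatio w) (-(w ^ 2 / a ^ 3)) a := by
  have h := ((hasDerivAt_const a (w ^ 2)).div ((hasDerivAt_pow 2 a).const_mul 2)
    (by positivity)).const_add 1
  exact h.congr_deriv (by field_simp; ring)

theorem waistRatio_injOn (hw : w ≠ 0) : Set.InjOn (waistRatio w) (Set.Ioi 0) := by
  rintro a (ha : 0 < a) b (hb : 0 < b) h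
  have hsq : a ^ 2 = b ^ 2 := by
    have h' : w ^ 2 / (2 * a ^ 2) = w ^ 2 / (2 * b ^ 2) := add_left_cancel h
    rw [div_eq_div_iff (by positivity) (by positivity)] at h'
    linarith [mul_left_cancel₀ (pow_ne_zero 2 hw) h']
  exact (sq_eq_sq₀ ha.le hb.le).1 hsq

theorem waistRatio_div_sqrt (hw : w ≠ 0) {z : ℝ} (hz : 1 < z) :
    waistRatio w (w / √(2 * z - 2)) = z := by
  have hz' : 0 < 2 * z - 2 := by linarith
  simp only [waistRatio, div_pow, sq_sqrt hz'.le]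
  field_simp
  ring

end WaistRatio

section Energy

variable {hbar m w V a : ℝ}

theorem energy_eq_waistRatio (hm : m ≠ 0) (hw : w ≠ 0) (ha : a ≠ 0) :
    hbar ^ 2 / (2 * m * a ^ 2) - V * w ^ 2 / (w ^ 2 + 2 * a ^ 2)
      = hbar ^ 2 / (m * w ^ 2) * waistRatio w a + V / waistRatio w a
        - (hbar ^ 2 / (m * w ^ 2) + V) := by
  have : w ^ 2 + 2 * a ^ 2 ≠ 0 := by positivity
  unfold waistRatio
  field_simp
  ring

theorem hasDerivAt_energy (hm : m ≠ 0) (hw : w ≠ 0) (ha : a ≠ 0) :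
    HasDerivAt (fun a => hbar ^ 2 / (2 * m * a ^ 2) - V * w ^ 2 / (w ^ 2 + 2 * a ^ 2))
      ((hbar ^ 2 / (m * w ^ 2) - V / waistRatio w a ^ 2) * -(w ^ 2 / a ^ 3)) a := by
  have hcomp := ((hasDerivAt_mul_add_div (hbar ^ 2 / (m * w ^ 2)) V
    (waistRatio_pos w a).ne').comp a (hasDerivAt_waistRatio w ha)).sub_const
      (hbar ^ 2 / (m * w ^ 2) + V)
  refine hcomp.congr_of_eventuallyEq ?_
  filter_upwards [eventually_ne_nhds ha] with b hb
  exact energy_eq_waistRatio hm hw hb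

end Energy

/-- For `ℏ, m, w > 0` and `𝒱 > ℏ²/(m w²)`, the variational energy
`E(a) = ℏ²/(2 m a²) − 𝒱 w²/(w² + 2a²)` has a unique critical point on `(0, ∞)`,
located at `a⊥ = w / √(2 w √(m𝒱)/ℏ − 2)`, with `a⊥² = ℏ w² / (2 (w √(m𝒱) − ℏ))`,
and this critical point is the global minimum of `E` on `(0, ∞)`. -/
theorem gaussian_variational_width_minimizer
    (hbar m w V : ℝ) (hhbar : 0 < hbar) (hm : 0 < m) (hw : 0 < w)
    (hV : hbar ^ 2 / (m * w ^ 2) < V)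
    (E : ℝ → ℝ)
    (hE : E = fun a => hbar ^ 2 / (2 * m * a ^ 2) - V * w ^ 2 / (w ^ 2 + 2 * a ^ 2))
    (aperp : ℝ)
    (haperp : aperp = w / Real.sqrt (2 * w * Real.sqrt (m * V) / hbar - 2)) :
    0 < aperp
    ∧ aperp ^ 2 = hbar * w ^ 2 / (2 * (w * Real.sqrt (m * V) - hbar))
    ∧ deriv E aperp = 0
    ∧ (∀ a : ℝ, 0 < a → deriv E a = 0 → a = aperp)
    ∧ (∀ a : ℝ, 0 < a → E aperp ≤ E a) := by
  set κ := hbar ^ 2 / (m * w ^ 2)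
  set z₀ := w * √(m * V) / hbar
  have hκ : 0 < κ := by positivity
  have hκz₀ : κ * z₀ ^ 2 = V := by
    rw [div_pow, mul_pow, sq_sqrt (by nlinarith)]
    simp only [κ]
    field_simp
  have hz₀ : 1 < z₀ := by
    have : 1 < z₀ ^ 2 := lt_of_mul_lt_mul_left (by linarith) hκ.le
    exact (one_lt_sq_iff₀ (by positivity)).1 this
  have haperp' : aperp = w / √(2 * z₀ - 2) := by
    rw [haperp]; congr 2; ring
  have hap : 0 < aperp := haperp' ▸ div_pos hw (sqrt_pos.2 (by linarith))
  have hζ : waistRatio w aperp = z₀ := haperp' ▸ waistRatio_div_sqrt hw.ne' hz₀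
  have hcrit : ∀ a, 0 < a → (deriv E a = 0 ↔ waistRatio w a = z₀) := by
    intro a ha
    rw [hE, (hasDerivAt_energy hm.ne' hw.ne' ha.ne').deriv, mul_eq_zero,
      or_iff_left (neg_ne_zero.2 (by positivity)),
      sub_div_sq_eq_zero_iff hκ.ne' (waistRatio_pos w a) (by linarith) hκz₀]
  refine ⟨hap, ?_, (hcrit aperp hap).2 hζ,
    fun a ha h => waistRatio_injOn hw.ne' ha hap (((hcrit a ha).1 h).trans hζ.symm),
    fun a ha => ?_⟩
  · have hws : hbar < w * √(m * V) := (one_lt_div hhbar).1 hz₀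
    rw [haperp', div_pow, sq_sqrt (by linarith), div_eq_div_iff (by linarith) (by linarith)]
    simp only [z₀]
    field_simp
  · rw [hE]
    dsimp only
    rw [energy_eq_waistRatio hm.ne' hw.ne' hap.ne', energy_eq_waistRatio hm.ne' hw.ne' ha.ne',
      hζ]
    exact sub_le_sub_right (mul_add_div_le_mul_add_div hκ.le (waistRatio_pos w a) hκz₀) _
end
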